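/- Suppose (λ_opt, s_opt) satisfies the TRS optimality conditions with ‖s_opt‖ = Δ. Let y = (y₁; y₂) ∈ ℝ^{2n} with y₁, y₂ ∈ ℝ^n be a unit-norm eigenvector of M = [[−A, ggᵀ/Δ²], [I, −A]] associated with the eigenvalue λ_opt, and suppose gᵀy₂ ≠ 0. Then the TRS has a unique global minimizer over {s : ‖s‖ ≤ Δ}, and it equals −(Δ²/(gᵀy₂))·y₁. -/

import Mathlib

open Matrix

noncomputable section

/-- Euclidean 2-norm of a finitely indexed real vector. -/
def enorm₂ {ι : Type*} [Fintype ι] (v : ι → ℝ) : ℝ := ‖(WithLp.equiv 2 (ι → ℝ)).symm v‖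

lemma enorm_sq {ι : Type*} [Fintype ι] (v : ι → ℝ) : enorm₂ v ^ 2 = v ⬝ᵥ v := by
  rw [enorm₂, EuclideanSpace.norm_eq, Real.sq_sqrt (by positivity)]
  simp [dotProduct, sq]

lemma enorm_nonneg' {ι : Type*} [Fintype ι] (v : ι → ℝ) : 0 ≤ enorm₂ v := norm_nonneg _

lemma symm_dot {n : ℕ} (A : Matrix (Fin n) (Fin n) ℝ) (hA : A.IsSymm) (x z : Fin n → ℝ) :
    x ⬝ᵥ A *ᵥ z = z ⬝ᵥ A *ᵥ x := by
  rw [dotProduct_mulVec, ← Matrix.mulVec_transpose, hA.eq, dotProduct_comm]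

lemma vecMulVec_mulVec' {n : ℕ} (g y₂ : Fin n → ℝ) :
    (Matrix.vecMulVec g g) *ᵥ y₂ = (g ⬝ᵥ y₂) • g := by
  ext i
  simp [Matrix.mulVec, Matrix.vecMulVec_apply, dotProduct, mul_assoc, ← Finset.mul_sum]
  ring

/-- If `(λ_opt, s_opt)` satisfies the TRS optimality conditions with `‖s_opt‖ = Δ`, and
`y = (y₁; y₂)` is a unit-norm eigenvector of `M = [[−A, ggᵀ/Δ²], [I, −A]]` associated with
the eigenvalue `λ_opt` with `gᵀy₂ ≠ 0`, then the TRS has a unique global minimizer over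
the ball `{s : ‖s‖ ≤ Δ}`, and it equals `−(Δ²/(gᵀy₂))·y₁`. -/
theorem stmt_2 {n : ℕ} (A : Matrix (Fin n) (Fin n) ℝ) (hA : A.IsSymm)
    (g : Fin n → ℝ) (hg : g ≠ 0) (Δ : ℝ) (hΔ : 0 < Δ)
    (q : (Fin n → ℝ) → ℝ)
    (hq : ∀ s, q s = g ⬝ᵥ s + (1 / 2) * (s ⬝ᵥ A.mulVec s))
    (lamopt : ℝ) (sopt : Fin n → ℝ)
    (h1 : enorm₂ sopt = Δ) (h2 : 0 ≤ lamopt)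
    (h3 : (A + lamopt • (1 : Matrix (Fin n) (Fin n) ℝ)).mulVec sopt = -g)
    (h4 : lamopt * (Δ - enorm₂ sopt) = 0)
    (h5 : (A + lamopt • (1 : Matrix (Fin n) (Fin n) ℝ)).PosSemidef)
    (M : Matrix (Fin n ⊕ Fin n) (Fin n ⊕ Fin n) ℝ)
    (hM : M = Matrix.fromBlocks (-A) ((Δ ^ 2)⁻¹ • Matrix.vecMulVec g g) 1 (-A))
    (y₁ y₂ : Fin n → ℝ)
    (heig : M.mulVec (Sum.elim y₁ y₂) = lamopt • Sum.elim y₁ y₂)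
    (hy : enorm₂ (Sum.elim y₁ y₂) = 1)
    (hgy₂ : g ⬝ᵥ y₂ ≠ 0) :
    (enorm₂ ((-(Δ ^ 2 / (g ⬝ᵥ y₂))) • y₁) ≤ Δ ∧
      (∀ s : Fin n → ℝ, enorm₂ s ≤ Δ → q ((-(Δ ^ 2 / (g ⬝ᵥ y₂))) • y₁) ≤ q s)) ∧
    (∀ s : Fin n → ℝ, enorm₂ s ≤ Δ → (∀ s' : Fin n → ℝ, enorm₂ s' ≤ Δ → q s ≤ q s') →
      s = (-(Δ ^ 2 / (g ⬝ᵥ y₂))) • y₁) := by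
  have hΔ0 : (Δ : ℝ) ≠ 0 := ne_of_gt hΔ
  set c : ℝ := g ⬝ᵥ y₂ with hc
  set t : ℝ := -(Δ ^ 2 / c) with ht
  set H : Matrix (Fin n) (Fin n) ℝ := A + lamopt • (1 : Matrix (Fin n) (Fin n) ℝ) with hH
  set sstar : (Fin n → ℝ) := t • y₁ with hsstar
  -- H applied to a vector
  have hHv : ∀ x : Fin n → ℝ, H *ᵥ x = A *ᵥ x + lamopt • x := by
    intro x
    rw [hH, Matrix.add_mulVec, Matrix.smul_mulVec, Matrix.one_mulVec]
  have hHsymm : H.IsSymm := by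
    rw [hH, Matrix.IsSymm, Matrix.transpose_add, Matrix.transpose_smul,
      Matrix.transpose_one, hA.eq]
  -- extract the two block equations
  have heig' := heig
  rw [hM, Matrix.fromBlocks_mulVec] at heig'
  have hinl : (-A) *ᵥ y₁ + ((Δ ^ 2)⁻¹ • Matrix.vecMulVec g g) *ᵥ y₂ = lamopt • y₁ := by
    funext i
    have := congrFun heig' (Sum.inl i)
    simpa using this
  have hinr : (1 : Matrix (Fin n) (Fin n) ℝ) *ᵥ y₁ + (-A) *ᵥ y₂ = lamopt • y₂ := by
    funext i
    have := congrFun heig' (Sum.inr i)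
    simpa using this
  -- H y₁ = ((Δ²)⁻¹ * c) • g
  have HE1 : H *ᵥ y₁ = ((Δ ^ 2)⁻¹ * c) • g := by
    rw [hHv]
    have h' : ((Δ ^ 2)⁻¹ • Matrix.vecMulVec g g) *ᵥ y₂ = ((Δ ^ 2)⁻¹ * c) • g := by
      rw [Matrix.smul_mulVec, vecMulVec_mulVec', smul_smul]
    rw [Matrix.neg_mulVec] at hinl
    have := hinl
    rw [h'] at this
    have h2' : A *ᵥ y₁ + lamopt • y₁ = ((Δ ^ 2)⁻¹ * c) • g := by
      have := congrArg (fun z => z + A *ᵥ y₁ - lamopt • y₁) this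
      funext i
      have hi := congrFun this i
      simp only [Pi.add_apply, Pi.sub_apply, Pi.neg_apply, Pi.smul_apply, smul_eq_mul] at hi ⊢
      linarith
    exact h2'
  -- H y₂ = y₁
  have HE2 : H *ᵥ y₂ = y₁ := by
    rw [hHv]
    rw [Matrix.one_mulVec, Matrix.neg_mulVec] at hinr
    funext i
    have hi := congrFun hinr i
    simp only [Pi.add_apply, Pi.neg_apply, Pi.smul_apply, smul_eq_mul] at hi ⊢
    linarith
  -- H sstar = -g
  have Hsstar : H *ᵥ sstar = -g := by
    rw [hsstar, Matrix.mulVec_smul, HE1, smul_smul, ht]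
    have : -(Δ ^ 2 / c) * ((Δ ^ 2)⁻¹ * c) = -1 := by
      field_simp
    rw [this]
    funext i; simp
  -- sstar ⬝ᵥ sstar = Δ²
  have nst : sstar ⬝ᵥ sstar = Δ ^ 2 := by
    have hy1 : y₁ ⬝ᵥ y₁ = (Δ ^ 2)⁻¹ * c ^ 2 := by
      calc y₁ ⬝ᵥ y₁ = y₁ ⬝ᵥ (H *ᵥ y₂) := by rw [HE2]
        _ = y₂ ⬝ᵥ (H *ᵥ y₁) := symm_dot H hHsymm y₁ y₂
        _ = y₂ ⬝ᵥ (((Δ ^ 2)⁻¹ * c) • g) := by rw [HE1]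
        _ = ((Δ ^ 2)⁻¹ * c) * (y₂ ⬝ᵥ g) := by rw [dotProduct_smul]; simp
        _ = (Δ ^ 2)⁻¹ * c ^ 2 := by rw [dotProduct_comm, ← hc]; ring
    rw [hsstar]
    rw [smul_dotProduct, dotProduct_smul, smul_eq_mul, smul_eq_mul, hy1, ht]
    field_simp
  have enst : enorm₂ sstar = Δ := by
    have h := enorm_sq sstar
    rw [nst] at h
    nlinarith [enorm_nonneg' sstar, hΔ]
  -- key identity
  have keyid : ∀ s : Fin n → ℝ, q s - q sstar =
      (1 / 2) * ((s - sstar) ⬝ᵥ (H *ᵥ (s - sstar))) + (lamopt / 2) * (Δ ^ 2 - s ⬝ᵥ s) := by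
    intro s
    have hgs : ∀ x : Fin n → ℝ, g ⬝ᵥ x = -(x ⬝ᵥ (A *ᵥ sstar)) - lamopt * (x ⬝ᵥ sstar) := by
      intro x
      have : g = -(H *ᵥ sstar) := by rw [Hsstar]; simp
      rw [this, hHv, dotProduct_comm]
      simp [dotProduct_add, dotProduct_smul]
      ring
    have hcross : sstar ⬝ᵥ A *ᵥ s = s ⬝ᵥ A *ᵥ sstar := symm_dot A hA sstar s
    have hcross2 : sstar ⬝ᵥ s = s ⬝ᵥ sstar := dotProduct_comm _ _
    rw [hq s, hq sstar, hgs s, hgs sstar]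
    rw [hHv]
    simp only [sub_dotProduct, dotProduct_sub, dotProduct_add, Matrix.mulVec_sub,
      dotProduct_smul, smul_eq_mul, Pi.smul_apply, smul_sub]
    rw [hcross, hcross2, nst]
    ring
  -- PSD facts
  have hpsd : ∀ x : Fin n → ℝ, 0 ≤ x ⬝ᵥ (H *ᵥ x) := by
    intro x
    have := h5.dotProduct_mulVec_nonneg x
    simpa using this
  have dot_self_nonneg : ∀ x : Fin n → ℝ, 0 ≤ x ⬝ᵥ x := by
    intro x
    exact Finset.sum_nonneg fun i _ => mul_self_nonneg (x i)
  have hball : ∀ s : Fin n → ℝ, enorm₂ s ≤ Δ → s ⬝ᵥ s ≤ Δ ^ 2 := by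
    intro s hs
    have := enorm_sq s
    nlinarith [enorm_nonneg' s]
  -- minimality
  have hmin : ∀ s : Fin n → ℝ, enorm₂ s ≤ Δ → q sstar ≤ q s := by
    intro s hs
    have h1' := keyid s
    have h2' := hpsd (s - sstar)
    have h3' := hball s hs
    have h4' := mul_nonneg (by linarith : (0:ℝ) ≤ lamopt / 2) (by linarith : (0:ℝ) ≤ Δ ^ 2 - s ⬝ᵥ s)
    linarith
  refine ⟨⟨le_of_eq enst, fun s hs => hmin s hs⟩, ?_⟩
  -- uniqueness
  intro s hs hsm
  have hqeq : q s = q sstar :=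
    le_antisymm (hsm sstar (le_of_eq enst)) (hmin s hs)
  have h1' := keyid s
  rw [hqeq, sub_self] at h1'
  have h2' := hpsd (s - sstar)
  have h3' := hball s hs
  have h4' := mul_nonneg (by linarith : (0:ℝ) ≤ lamopt / 2) (by linarith : (0:ℝ) ≤ Δ ^ 2 - s ⬝ᵥ s)
  have hzero : (s - sstar) ⬝ᵥ (H *ᵥ (s - sstar)) = 0 := by linarith
  have hker : H *ᵥ (s - sstar) = 0 := by
    have := (h5.dotProduct_mulVec_zero_iff (s - sstar)).mp (by simpa using hzero)
    exact this
  -- sstar ⬝ᵥ (s - sstar) = 0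
  have horth : sstar ⬝ᵥ (s - sstar) = 0 := by
    have : y₁ ⬝ᵥ (s - sstar) = 0 := by
      calc y₁ ⬝ᵥ (s - sstar) = (H *ᵥ y₂) ⬝ᵥ (s - sstar) := by rw [HE2]
        _ = y₂ ⬝ᵥ (H *ᵥ (s - sstar)) := by
            rw [dotProduct_comm]; exact (symm_dot H hHsymm (s - sstar) y₂)
        _ = 0 := by rw [hker, dotProduct_zero]
    rw [hsstar, smul_dotProduct, this, smul_eq_mul, mul_zero]
  -- conclude s = sstar
  have hdd : (s - sstar) ⬝ᵥ (s - sstar) = 0 := by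
    have hsplit : s = sstar + (s - sstar) := by funext i; simp
    have hexp : s ⬝ᵥ s = Δ ^ 2 + 2 * (sstar ⬝ᵥ (s - sstar)) + (s - sstar) ⬝ᵥ (s - sstar) := by
      conv_lhs => rw [hsplit]
      rw [add_dotProduct, dotProduct_add, dotProduct_add, nst,
        dotProduct_comm (s - sstar) sstar]
      ring
    rw [horth] at hexp
    have h0 := dot_self_nonneg (s - sstar)
    linarith
  have : s - sstar = 0 := dotProduct_self_eq_zero.mp hdd
  have : s = sstar := by
    funext i
    have hi := congrFun this i
    simp only [Pi.sub_apply, Pi.zero_apply] at hi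
    linarith
  exact this
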